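/- Let Y be a Banach space, B ∈ L(Y), and ε > 0. Then the open ε-pseudospectrum satisfies spec_ε B = ⋃_{‖T‖ < ε} Spec(B + T), the union being over all bounded operators T on Y with norm strictly less than ε. -/

import Mathlib

/-!
Write `A = B - λ`, so that `λ ∈ Spec(B + T)` iff `A + T` is not invertible. If `A` is invertible
and `‖T‖ < ‖A⁻¹‖⁻¹`, the Neumann series makes `A + T = A (1 + A⁻¹T)` invertible. Conversely, if
`‖A⁻¹‖ > ε⁻¹`, pick `y` with `‖y‖ < 1` and `x = A⁻¹y` of norm `> ε⁻¹`; a Hahn–Banach functional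
norming `x` gives a rank-one `T` with `T x = -A x` and `‖T‖ ≤ ‖y‖ / ‖x‖ < ε`, so `A + T` kills `x`.
-/

/-- The open `ε`-pseudospectrum of `B` (convention: `1/‖(B−λI)⁻¹‖ = 0` when
`B − λI` is not invertible). -/
noncomputable def openPseudospectrum {Y : Type*} [NormedAddCommGroup Y] [NormedSpace ℂ Y]
    (ε : ℝ) (B : Y →L[ℂ] Y) : Set ℂ :=
  {lam : ℂ | ‖Ring.inverse (B - lam • (1 : Y →L[ℂ] Y))‖⁻¹ < ε}

theorem spectrum.mem_add_iff_not_isUnit {R A : Type*} [CommRing R] [Ring A] [Algebra R A]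
    (b t : A) (r : R) : r ∈ spectrum R (b + t) ↔ ¬IsUnit (b - r • 1 + t) := by
  rw [spectrum.mem_iff, ← IsUnit.neg_iff, Algebra.algebraMap_eq_smul_one, neg_sub,
    sub_add_eq_add_sub]

theorem isUnit_add_of_norm_lt_norm_inverse_inv {R : Type*} [NormedRing R]
    [HasSummableGeomSeries R] {a t : R} (ha : IsUnit a) (ht : ‖t‖ < ‖Ring.inverse a‖⁻¹) :
    IsUnit (a + t) := by
  obtain ⟨u, rfl⟩ := ha
  rw [Ring.inverse_unit] at ht
  exact (u.ofNearby (u + t) (by rwa [add_sub_cancel_left])).isUnit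

namespace ContinuousLinearMap

variable {𝕜 E F : Type*} [RCLike 𝕜] [NormedAddCommGroup E] [NormedSpace 𝕜 E]
  [NormedAddCommGroup F] [NormedSpace 𝕜 F]

theorem exists_apply_eq_norm_le_div {x : E} (hx : x ≠ 0) (y : F) :
    ∃ T : E →L[𝕜] F, T x = y ∧ ‖T‖ ≤ ‖y‖ / ‖x‖ := by
  have hx' : (‖x‖ : 𝕜) ≠ 0 := by exact_mod_cast norm_ne_zero_iff.2 hx
  obtain ⟨g, hg, hgx⟩ := exists_dual_vector 𝕜 x (norm_ne_zero_iff.2 hx)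
  refine ⟨(‖x‖ : 𝕜)⁻¹ • g.smulRight y, by simp [hgx, hx'], le_of_eq ?_⟩
  rw [norm_smul, norm_smulRight_apply, hg, norm_inv, RCLike.norm_ofReal, abs_norm, one_mul,
    div_eq_inv_mul]

variable [CompleteSpace E] [Nontrivial E]

theorem exists_norm_lt_not_isUnit_add {A : E →L[𝕜] E} (hA : IsUnit A) {ε : ℝ} (hε : 0 < ε)
    (h : ‖Ring.inverse A‖⁻¹ < ε) : ∃ T : E →L[𝕜] E, ‖T‖ < ε ∧ ¬IsUnit (A + T) := by
  obtain ⟨u, rfl⟩ := hA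
  rw [Ring.inverse_unit] at h
  have hpos : 0 < ‖(↑u⁻¹ : E →L[𝕜] E)‖ := Units.norm_pos u⁻¹
  obtain ⟨y, hy, hxy⟩ :=
    (↑u⁻¹ : E →L[𝕜] E).exists_lt_apply_of_lt_opNorm ((inv_lt_comm₀ hpos hε).1 h)
  set x := (↑u⁻¹ : E →L[𝕜] E) y
  have hx : 0 < ‖x‖ := (inv_pos.2 hε).trans hxy
  have hux : (u : E →L[𝕜] E) x = y := congr($(u.mul_inv) y)
  obtain ⟨T, hTx, hT⟩ := exists_apply_eq_norm_le_div (𝕜 := 𝕜) (norm_pos_iff.1 hx) (-y)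
  refine ⟨T, ?_, fun hu ↦ norm_pos_iff.1 hx ?_⟩
  · calc ‖T‖ ≤ ‖-y‖ / ‖x‖ := hT
      _ ≤ 1 / ‖x‖ := by gcongr; exact (norm_neg y).trans_le hy.le
      _ < ε := by rw [one_div]; exact (inv_lt_comm₀ hx hε).2 hxy
  · refine (isUnit_iff_bijective.1 hu).1 ?_
    rw [add_apply, hux, hTx, add_neg_cancel, map_zero]

theorem norm_inverse_inv_lt_iff_exists_not_isUnit_add (A : E →L[𝕜] E) {ε : ℝ} (hε : 0 < ε) :
    ‖Ring.inverse A‖⁻¹ < ε ↔ ∃ T : E →L[𝕜] E, ‖T‖ < ε ∧ ¬IsUnit (A + T) := by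
  by_cases hA : IsUnit A
  · refine ⟨exists_norm_lt_not_isUnit_add hA hε, fun ⟨T, hT, hAT⟩ ↦ ?_⟩
    by_contra! h
    exact hAT (isUnit_add_of_norm_lt_norm_inverse_inv hA (hT.trans_le h))
  · rw [Ring.inverse_non_unit _ hA, norm_zero, inv_zero]
    exact ⟨fun _ ↦ ⟨0, norm_zero.trans_lt hε, by rwa [add_zero]⟩, fun _ ↦ hε⟩

end ContinuousLinearMap

/-- For `ε > 0`, the open `ε`-pseudospectrum of `B` is the union of the spectra of all
perturbations `B + T` with `‖T‖ < ε`. -/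
theorem stmt_7 {Y : Type*} [NormedAddCommGroup Y] [NormedSpace ℂ Y] [CompleteSpace Y]
    [Nontrivial Y] (B : Y →L[ℂ] Y) (ε : ℝ) (hε : 0 < ε) :
    openPseudospectrum ε B = ⋃ (T : Y →L[ℂ] Y) (_ : ‖T‖ < ε), spectrum ℂ (B + T) := by
  ext lam
  simp only [openPseudospectrum, Set.mem_iUnion, exists_prop,
    spectrum.mem_add_iff_not_isUnit]
  exact ContinuousLinearMap.norm_inverse_inv_lt_iff_exists_not_isUnit_add _ hε
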